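/- arXiv:2106.14601 — 2 statements merged into one kernel-verified Lean document; each statement's English description precedes it below -/
import Mathlib

section
/- Let G = (V,E) be a finite simple graph, and let G' be the complete graph on V with edge weights w(e) = |V|+1 if e ∈ E and w(e) = 0 otherwise, and vertex rewards all equal to 1. Then for every k > 0: G has an independent set of size k if and only if there exists X ⊆ V with ∑_{v∈X} 1 − ∑_{e ⊆ X, |e|=2} w(e) ≥ k. -/
/-- hardness reduction on the complete graph: edges of G get
penalty |V|+1, non-edges penalty 0, each vertex reward 1. -/
theorem stmt5 {V : Type} [Fintype V] [DecidableEq V]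
    (G : SimpleGraph V) [DecidableRel G.Adj] (k : ℕ) (hk : 0 < k) :
    (∃ S : Finset V, (∀ u ∈ S, ∀ v ∈ S, ¬ G.Adj u v) ∧ S.card = k)
    ↔ ∃ X : Finset V, (k : ℤ) ≤ (X.card : ℤ)
        - ∑ s ∈ X.powersetCard 2,
            (if ∃ u ∈ s, ∃ v ∈ s, G.Adj u v
              then ((Fintype.card V : ℤ) + 1) else 0) := by
  constructor
  · rintro ⟨S, hind, hcard⟩
    refine ⟨S, ?_⟩
    have hz : ∑ s ∈ S.powersetCard 2,
        (if ∃ u ∈ s, ∃ v ∈ s, G.Adj u v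
          then ((Fintype.card V : ℤ) + 1) else 0) = 0 := by
      apply Finset.sum_eq_zero
      intro s hs
      rw [Finset.mem_powersetCard] at hs
      rw [if_neg]
      rintro ⟨u, hu, v, hv, hadj⟩
      exact hind u (hs.1 hu) v (hs.1 hv) hadj
    rw [hz, hcard]; simp
  · rintro ⟨X, hX⟩
    by_cases hind : ∀ u ∈ X, ∀ v ∈ X, ¬ G.Adj u v
    · have hz : ∑ s ∈ X.powersetCard 2,
          (if ∃ u ∈ s, ∃ v ∈ s, G.Adj u v
            then ((Fintype.card V : ℤ) + 1) else 0) = 0 := by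
        apply Finset.sum_eq_zero
        intro s hs
        rw [Finset.mem_powersetCard] at hs
        rw [if_neg]
        rintro ⟨u, hu, v, hv, hadj⟩
        exact hind u (hs.1 hu) v (hs.1 hv) hadj
      rw [hz, sub_zero] at hX
      have hk' : k ≤ X.card := by exact_mod_cast hX
      obtain ⟨S, hSX, hScard⟩ := Finset.exists_subset_card_eq hk'
      exact ⟨S, fun u hu v hv => hind u (hSX hu) v (hSX hv), hScard⟩
    · exfalso
      push_neg at hind
      obtain ⟨u, hu, v, hv, hadj⟩ := hind
      have hne : u ≠ v := G.ne_of_adj hadj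
      have hmem : ({u, v} : Finset V) ∈ X.powersetCard 2 := by
        rw [Finset.mem_powersetCard]
        constructor
        · intro x hx
          rcases Finset.mem_insert.mp hx with h | h
          · exact h ▸ hu
          · exact (Finset.mem_singleton.mp h) ▸ hv
        · exact Finset.card_pair hne
      have hle : ((Fintype.card V : ℤ) + 1) ≤
          ∑ s ∈ X.powersetCard 2,
            (if ∃ u ∈ s, ∃ v ∈ s, G.Adj u v
              then ((Fintype.card V : ℤ) + 1) else 0) := by
        have := Finset.single_le_sum (f := fun s =>
            (if ∃ u ∈ s, ∃ v ∈ s, G.Adj u v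
              then ((Fintype.card V : ℤ) + 1) else 0))
          (fun s _ => by positivity) hmem
        rwa [if_pos ⟨u, by simp, v, by simp, hadj⟩] at this
      have hXcard : (X.card : ℤ) ≤ (Fintype.card V : ℤ) := by
        exact_mod_cast Finset.card_le_univ X
      omega
end

section
/- Let G = (V,E) be a finite simple graph with vertex set V, and construct a star graph with center c ∉ V and leaves V. Assign reward 1 to each v ∈ V and reward M > |V| to c; for each edge {u,v} ∈ E assign a penalty set {u,c,v} with penalty |V|+1. Then G has an independent set of size k (with 0 ≤ k ≤ |V|) if and only if there exists X ⊆ V ∪ {c} whose profit (sum of rewards of chosen vertices minus sum of penalties of fully chosen penalty sets) is at least M + k. -/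
/-- star-graph reduction. Vertices of G are the leaves, `none` is
the center c with reward M > |V|; each edge {u,v} of G yields the penalty set
{u,c,v} with penalty |V|+1. G has an independent set of size k iff some
selection X ⊆ V ∪ {c} has profit at least M + k. -/
theorem stmt6 {V : Type} [Fintype V] [DecidableEq V]
    (G : SimpleGraph V) [DecidableRel G.Adj]
    (M : ℤ) (hM : (Fintype.card V : ℤ) < M) (k : ℕ) (hk : k ≤ Fintype.card V) :
    (∃ S : Finset V, (∀ u ∈ S, ∀ v ∈ S, ¬ G.Adj u v) ∧ S.card = k)
    ↔ ∃ X : Finset (Option V),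
        M + (k : ℤ) ≤ (∑ x ∈ X, (if x = none then M else 1))
          - ((Fintype.card V : ℤ) + 1)
            * ((G.edgeFinset.filter
                (fun e => none ∈ X ∧ ∀ v ∈ e, some v ∈ X)).card : ℤ) := by
  constructor
  · rintro ⟨S, hind, hcard⟩
    refine ⟨insert none (S.image some), ?_⟩
    have himg : (none : Option V) ∉ S.image some := by simp
    have hfilter : (G.edgeFinset.filter
        (fun e => none ∈ insert none (S.image some) ∧
          ∀ v ∈ e, some v ∈ insert none (S.image some))) = ∅ := by
      rw [Finset.filter_eq_empty_iff]
      intro e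
      induction e using Sym2.ind with
      | _ u v =>
        intro he
        rw [SimpleGraph.mem_edgeFinset, SimpleGraph.mem_edgeSet] at he
        rintro ⟨-, hall⟩
        have hu := hall u (by simp)
        have hv := hall v (Sym2.mem_mk_right u v)
        simp only [Finset.mem_insert, Finset.mem_image, reduceCtorEq,
          Option.some.injEq, false_or] at hu hv
        obtain ⟨u', hu', rfl⟩ := hu
        obtain ⟨v', hv', rfl⟩ := hv
        exact hind u' hu' v' hv' he
    rw [hfilter]
    have hsum : (∑ x ∈ insert none (S.image some),
        (if x = none then M else 1)) = M + k := by
      rw [Finset.sum_insert himg, if_pos rfl]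
      have : ∀ x ∈ S.image some, (if x = none then M else (1 : ℤ)) = 1 := by
        rintro x hx
        simp only [Finset.mem_image] at hx
        obtain ⟨v, -, rfl⟩ := hx
        simp
      rw [Finset.sum_congr rfl this, Finset.sum_const,
        Finset.card_image_of_injective _ (Option.some_injective V), hcard]
      simp
    rw [hsum]
    simp
  · rintro ⟨X, hX⟩
    by_cases h0 : (none : Option V) ∈ X
    · set T : Finset V := Finset.univ.filter (fun v => some v ∈ X) with hT
      have hsub : X.erase none ⊆ T.image some := by
        intro x hx
        rw [Finset.mem_erase] at hx
        match x with
        | none => exact absurd rfl hx.1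
        | some v =>
          refine Finset.mem_image_of_mem some ?_
          rw [hT, Finset.mem_filter]
          exact ⟨Finset.mem_univ v, hx.2⟩
      have hcardle : ((X.erase none).card : ℤ) ≤ T.card := by
        exact_mod_cast le_trans (Finset.card_le_card hsub)
          (le_of_eq (Finset.card_image_of_injective _ (Option.some_injective V)))
      have hsum : (∑ x ∈ X, (if x = none then M else 1)) ≤ M + T.card := by
        rw [← Finset.add_sum_erase X _ h0, if_pos rfl]
        have : (∑ x ∈ X.erase none, (if x = none then M else (1:ℤ)))
            = (X.erase none).card := by
          rw [Finset.sum_congr rfl (fun x hx => if_neg (Finset.mem_erase.mp hx).1),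
            Finset.sum_const]
          simp
        rw [this]
        linarith
      have hTle : (T.card : ℤ) ≤ Fintype.card V := by
        exact_mod_cast Finset.card_le_card (Finset.subset_univ T)
      set F := G.edgeFinset.filter (fun e => none ∈ X ∧ ∀ v ∈ e, some v ∈ X) with hF
      by_cases hFe : F = ∅
      · rw [hFe] at hX
        simp only [Finset.card_empty, Nat.cast_zero, mul_zero, sub_zero] at hX
        have hkT : k ≤ T.card := by
          have : (k : ℤ) ≤ T.card := by linarith
          exact_mod_cast this
        obtain ⟨S, hST, hScard⟩ := Finset.exists_subset_card_eq hkT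
        refine ⟨S, ?_, hScard⟩
        intro u hu v hv hadj
        have huX : some u ∈ X := by
          have := hST hu; rw [hT, Finset.mem_filter] at this; exact this.2
        have hvX : some v ∈ X := by
          have := hST hv; rw [hT, Finset.mem_filter] at this; exact this.2
        have : s(u, v) ∈ F := by
          rw [hF, Finset.mem_filter]
          refine ⟨SimpleGraph.mem_edgeFinset.mpr hadj, h0, ?_⟩
          intro w hw
          rcases Sym2.mem_iff.mp hw with rfl | rfl
          · exact huX
          · exact hvX
        rw [hFe] at this
        exact absurd this (Finset.notMem_empty _)
      · exfalso
        have hF1 : (1 : ℤ) ≤ F.card := by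
          have := Finset.card_pos.mpr (Finset.nonempty_of_ne_empty hFe)
          exact_mod_cast this
        have hpen : ((Fintype.card V : ℤ) + 1) ≤
            ((Fintype.card V : ℤ) + 1) * F.card := by
          nlinarith
        have hk0 : (0 : ℤ) ≤ k := Int.ofNat_nonneg k
        linarith
    · exfalso
      have hFe : G.edgeFinset.filter (fun e => none ∈ X ∧ ∀ v ∈ e, some v ∈ X) = ∅ := by
        rw [Finset.filter_eq_empty_iff]
        intro e _ hc
        exact h0 hc.1
      rw [hFe] at hX
      simp only [Finset.card_empty, Nat.cast_zero, mul_zero, sub_zero] at hX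
      have : (∑ x ∈ X, (if x = none then M else (1:ℤ))) = X.card := by
        rw [Finset.sum_congr rfl (fun x hx => if_neg (fun (h : x = none) => h0 (h ▸ hx))),
          Finset.sum_const]
        simp
      rw [this] at hX
      have hXsub : X ⊆ Finset.univ.image some := by
        intro x hx
        match x with
        | none => exact absurd hx h0
        | some v => exact Finset.mem_image_of_mem some (Finset.mem_univ v)
      have : (X.card : ℤ) ≤ Fintype.card V := by
        have := Finset.card_le_card hXsub
        have h2 := Finset.card_image_le (s := (Finset.univ : Finset V)) (f := some)
        simp only [Finset.card_univ] at h2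
        exact_mod_cast le_trans this h2
      have hk0 : (0 : ℤ) ≤ k := Int.ofNat_nonneg k
      linarith
end
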